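/- arXiv:math-ph/0408005 — 5 statements merged into one kernel-verified Lean document; each statement's English description precedes it below -/
import Mathlib

section
/- Nonholonomic Noether theorem: Let L : ℝⁿ × ℝⁿ → ℝ be a C² Lagrangian, let H assign to each point q ∈ ℝⁿ a linear subspace H(q) ⊆ ℝⁿ (the constraint distribution), and let q : ℝ → ℝⁿ be a C² curve satisfying the Lagrange–d'Alembert conditions: q̇(t) ∈ H(q(t)) for all t, and the Euler–Lagrange covector (d/dt)[D₂L(q(t), q̇(t))] − D₁L(q(t), q̇(t)) annihilates H(q(t)) for all t. Suppose ξ : ℝⁿ → ℝⁿ is a C¹ vector field with a global flow φ : ℝ × ℝⁿ → ℝⁿ (i.e. ∂φ/∂s (s,x) = ξ(φ(s,x)), φ(0,x) = x, with φ C¹ in (s,x) and differentiable in x) such that L(φ(s,x), D_xφ(s,x)·v) = L(x,v) for all s ∈ ℝ, x,v ∈ ℝⁿ, and such that ξ(x) ∈ H(x) for all x. Then the function t ↦ D₂L(q(t), q̇(t))·ξ(q(t)) is constant. -/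
/-!
Differentiating the invariance `L (φ s x, D_xφ(s,x) v) = L (x, v)` at `s = 0` gives the
infinitesimal identity `D₁L(x,v) (ξ x) + D₂L(x,v) (Dξ(x) v) = 0`; here `∂ₛ D_xφ(s,x) v |ₛ₌₀ = Dξ(x) v`
comes from the integral equation `D_xφ(s,x) v = v + ∫₀ˢ Dξ(φ(u,x)) D_xφ(u,x) v du`, obtained by
differentiating `φ(s,x) = x + ∫₀ˢ ξ(φ(u,x)) du` under the integral sign. Along the curve,
`d/dt [D₂L(q,q̇) ξ(q)] = (d/dt D₂L(q,q̇)) ξ(q) + D₂L(q,q̇) (Dξ(q) q̇)`; since `ξ(q) ∈ H(q)`,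
Lagrange–d'Alembert turns the first term into `D₁L(q,q̇) ξ(q)`, and the identity makes the sum vanish.
-/

open intervalIntegral Metric Set Function

section PartialDerivatives

variable {E F G : Type*} [NormedAddCommGroup E] [NormedSpace ℝ E]
  [NormedAddCommGroup F] [NormedSpace ℝ F] [NormedAddCommGroup G] [NormedSpace ℝ G]

theorem hasFDerivAt_partial_fst {f : E → F → G} {x : E} {y : F}
    (hf : DifferentiableAt ℝ (uncurry f) (x, y)) :
    HasFDerivAt (fun x' => f x' y) ((fderiv ℝ (uncurry f) (x, y)).comp (.inl ℝ E F)) x :=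
  HasFDerivAt.comp (g := uncurry f) (f := fun x' => (x', y)) x hf.hasFDerivAt
    (hasFDerivAt_prodMk_left x y)

theorem hasFDerivAt_partial_snd {f : E → F → G} {x : E} {y : F}
    (hf : DifferentiableAt ℝ (uncurry f) (x, y)) :
    HasFDerivAt (f x) ((fderiv ℝ (uncurry f) (x, y)).comp (.inr ℝ E F)) y :=
  HasFDerivAt.comp (g := uncurry f) (f := fun y' => (x, y')) y hf.hasFDerivAt
    (hasFDerivAt_prodMk_right x y)

theorem ContDiff.fderiv_partial_snd {n : WithTop ℕ∞} {f : E → F → G}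
    (hf : ContDiff ℝ (n + 1) (uncurry f)) :
    ContDiff ℝ n fun p : E × F => fderiv ℝ (f p.1) p.2 := by
  have hpartial : (fun p : E × F => fderiv ℝ (f p.1) p.2)
      = fun p => (fderiv ℝ (uncurry f) p).comp (.inr ℝ E F) :=
    funext fun p => (hasFDerivAt_partial_snd (hf.differentiable (by simp) p)).fderiv
  rw [hpartial]
  exact (hf.fderiv_right le_rfl).clm_comp contDiff_const

end PartialDerivatives

section Leibniz

variable {E : Type*} [NormedAddCommGroup E] [NormedSpace ℝ E]

theorem hasDerivAt_intervalIntegral_of_continuous_deriv {F F' : ℝ → ℝ → E} {a b r₀ : ℝ}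
    (hF : ∀ r, Continuous (F r)) (hF' : Continuous (uncurry F'))
    (hderiv : ∀ r u, HasDerivAt (fun r => F r u) (F' r u) r) :
    HasDerivAt (fun r => ∫ u in a..b, F r u) (∫ u in a..b, F' r₀ u) r₀ := by
  obtain ⟨C, hC⟩ : ∃ C, ∀ p ∈ closedBall r₀ 1 ×ˢ uIcc a b, ‖uncurry F' p‖ ≤ C :=
    ((isCompact_closedBall _ _).prod isCompact_uIcc).exists_bound_of_continuousOn
      hF'.continuousOn
  exact (hasDerivAt_integral_of_dominated_loc_of_deriv_le (bound := fun _ => C)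
    (ball_mem_nhds r₀ one_pos) (.of_forall fun r => (hF r).aestronglyMeasurable)
    ((hF r₀).intervalIntegrable a b)
    (hF'.comp (continuous_const.prodMk continuous_id)).aestronglyMeasurable
    (.of_forall fun u hu r hr => hC (r, u) ⟨ball_subset_closedBall hr, uIoc_subset_uIcc hu⟩)
    intervalIntegrable_const (.of_forall fun u _ r _ => hderiv r u)).2

end Leibniz

section Flow

variable {E : Type*} [NormedAddCommGroup E] [NormedSpace ℝ E] [CompleteSpace E]
  {ξ : E → E} {φ : ℝ → E → E}

theorem flow_eq_add_integral (hξ : Continuous ξ) (hφ : Continuous (uncurry φ))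
    (hflow : ∀ s x, HasDerivAt (fun u => φ u x) (ξ (φ s x)) s) (hφ0 : ∀ x, φ 0 x = x)
    (s : ℝ) (x : E) :
    φ s x = x + ∫ u in 0..s, ξ (φ u x) := by
  have hcont : Continuous fun u => ξ (φ u x) :=
    hξ.comp (hφ.comp (continuous_id.prodMk continuous_const))
  rw [integral_eq_sub_of_hasDerivAt (fun u _ => hflow u x) (hcont.intervalIntegrable 0 s), hφ0]
  abel

theorem fderiv_flow_apply_eq_add_integral (hξ : ContDiff ℝ 1 ξ) (hφ : ContDiff ℝ 1 (uncurry φ))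
    (hflow : ∀ s x, HasDerivAt (fun u => φ u x) (ξ (φ s x)) s) (hφ0 : ∀ x, φ 0 x = x)
    (s : ℝ) (x v : E) :
    fderiv ℝ (φ s) x v = v + ∫ u in 0..s, fderiv ℝ ξ (φ u x) (fderiv ℝ (φ u) x v) := by
  -- Differentiating along the line `r ↦ x + r • v` keeps the parameter domain compact,
  -- so no local compactness of `E` is needed for the Leibniz rule.
  have hline : ∀ r : ℝ, HasDerivAt (fun r : ℝ => x + r • v) v r := fun r => by
    simpa using ((hasDerivAt_id r).smul_const v).const_add x
  have hφ' : ∀ u y, HasFDerivAt (φ u) (fderiv ℝ (φ u) y) y := fun u y =>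
    (hasFDerivAt_partial_snd (hφ.differentiable one_ne_zero (u, y))).differentiableAt.hasFDerivAt
  have hDφ : Continuous fun p : ℝ × E => fderiv ℝ (φ p.1) p.2 :=
    (ContDiff.fderiv_partial_snd (n := 0) hφ).continuous
  have hcurve : Continuous fun p : ℝ × ℝ => (p.2, x + p.1 • v) := by fun_prop
  have hleibniz := hasDerivAt_intervalIntegral_of_continuous_deriv (a := 0) (b := s) (r₀ := 0)
    (F := fun r u => ξ (φ u (x + r • v)))
    (F' := fun r u => fderiv ℝ ξ (φ u (x + r • v)) (fderiv ℝ (φ u) (x + r • v) v))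
    (fun r => hξ.continuous.comp (hφ.continuous.comp (continuous_id.prodMk continuous_const)))
    (((hξ.continuous_fderiv one_ne_zero).comp (hφ.continuous.comp hcurve)).clm_apply
      ((hDφ.comp hcurve).clm_apply continuous_const))
    (fun r u => (hξ.differentiable one_ne_zero _).hasFDerivAt.comp_hasDerivAt r
      ((hφ' u _).comp_hasDerivAt r (hline r)))
  have hchain : HasDerivAt (fun r : ℝ => φ s (x + r • v)) (fderiv ℝ (φ s) x v) 0 :=
    (hφ' s x).comp_hasDerivAt_of_eq 0 (hline 0) (by simp)
  have hintegral : HasDerivAt (fun r : ℝ => φ s (x + r • v))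
      (v + ∫ u in 0..s, fderiv ℝ ξ (φ u x) (fderiv ℝ (φ u) x v)) 0 := by
    simp only [flow_eq_add_integral hξ.continuous hφ.continuous hflow hφ0 s]
    simp only [zero_smul, add_zero] at hleibniz
    exact (hline 0).add hleibniz
  exact hchain.unique hintegral

theorem hasDerivAt_fderiv_flow_apply (hξ : ContDiff ℝ 1 ξ) (hφ : ContDiff ℝ 1 (uncurry φ))
    (hflow : ∀ s x, HasDerivAt (fun u => φ u x) (ξ (φ s x)) s) (hφ0 : ∀ x, φ 0 x = x)
    (x v : E) :
    HasDerivAt (fun s => fderiv ℝ (φ s) x v) (fderiv ℝ ξ x v) 0 := by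
  have hcont : Continuous fun u => fderiv ℝ ξ (φ u x) (fderiv ℝ (φ u) x v) :=
    ((hξ.continuous_fderiv one_ne_zero).comp
      (hφ.continuous.comp (continuous_id.prodMk continuous_const))).clm_apply
      (((ContDiff.fderiv_partial_snd (n := 0) hφ).continuous.comp
        (continuous_id.prodMk continuous_const)).clm_apply continuous_const)
  have hφ0_id : φ 0 = id := funext hφ0
  have hrep : (fun s => fderiv ℝ (φ s) x v)
      = fun s => v + ∫ u in 0..s, fderiv ℝ ξ (φ u x) (fderiv ℝ (φ u) x v) :=
    funext fun s => fderiv_flow_apply_eq_add_integral hξ hφ hflow hφ0 s x v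
  rw [hrep]
  simpa [hφ0_id] using ((hcont.integral_hasStrictDerivAt 0 0).hasDerivAt.const_add v)

theorem infinitesimal_invariance_of_flow_invariant {F : Type*} [NormedAddCommGroup F]
    [NormedSpace ℝ F] {L : E → E → F} (hL : Differentiable ℝ (uncurry L))
    (hξ : ContDiff ℝ 1 ξ) (hφ : ContDiff ℝ 1 (uncurry φ))
    (hflow : ∀ s x, HasDerivAt (fun u => φ u x) (ξ (φ s x)) s) (hφ0 : ∀ x, φ 0 x = x)
    (hsym : ∀ s x v, L (φ s x) (fderiv ℝ (φ s) x v) = L x v) (x v : E) :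
    fderiv ℝ (fun y => L y v) x (ξ x) + fderiv ℝ (L x) v (fderiv ℝ ξ x v) = 0 := by
  have hφ0_id : φ 0 = id := funext hφ0
  have hlift : HasDerivAt (fun s => (φ s x, fderiv ℝ (φ s) x v)) (ξ x, fderiv ℝ ξ x v) 0 :=
    HasDerivAt.prodMk (by simpa [hφ0] using hflow 0 x)
      (hasDerivAt_fderiv_flow_apply hξ hφ hflow hφ0 x v)
  have hinvariant : HasDerivAt (fun s => uncurry L (φ s x, fderiv ℝ (φ s) x v))
      (fderiv ℝ (uncurry L) (x, v) (ξ x, fderiv ℝ ξ x v)) 0 :=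
    (hL _).hasFDerivAt.comp_hasDerivAt_of_eq 0 hlift (by simp [hφ0_id])
  have hconst : HasDerivAt (fun s => uncurry L (φ s x, fderiv ℝ (φ s) x v)) 0 0 := by
    simpa [uncurry, hsym] using hasDerivAt_const (0 : ℝ) (L x v)
  rw [(hasFDerivAt_partial_fst (hL (x, v))).fderiv, (hasFDerivAt_partial_snd (hL (x, v))).fderiv,
    ContinuousLinearMap.comp_apply, ContinuousLinearMap.comp_apply, ← map_add]
  simpa using hinvariant.unique hconst

end Flow

theorem nonholonomic_noether_general
    (n : ℕ)
    (L : (Fin n → ℝ) → (Fin n → ℝ) → ℝ)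
    (hL : ContDiff ℝ 2 (fun p : (Fin n → ℝ) × (Fin n → ℝ) => L p.1 p.2))
    (H : (Fin n → ℝ) → Submodule ℝ (Fin n → ℝ))
    (q : ℝ → (Fin n → ℝ)) (hq : ContDiff ℝ 2 q)
    -- Lagrange–d'Alembert: the Euler–Lagrange covector annihilates H(q t)
    (hLdA : ∀ t : ℝ, ∀ h ∈ H (q t),
      deriv (fun s => fderiv ℝ (L (q s)) (deriv q s) h) t
        = fderiv ℝ (fun x => L x (deriv q t)) (q t) h)
    -- the symmetry vector field and its global flow
    (ξ : (Fin n → ℝ) → (Fin n → ℝ)) (hξ : ContDiff ℝ 1 ξ)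
    (φ : ℝ → (Fin n → ℝ) → (Fin n → ℝ))
    (hφreg : ContDiff ℝ 1 (fun p : ℝ × (Fin n → ℝ) => φ p.1 p.2))
    (hflow : ∀ (s : ℝ) (x : Fin n → ℝ), HasDerivAt (fun u => φ u x) (ξ (φ s x)) s)
    (hφ0 : ∀ x, φ 0 x = x)
    -- the flow preserves the Lagrangian
    (hsym : ∀ (s : ℝ) (x v : Fin n → ℝ), L (φ s x) (fderiv ℝ (φ s) x v) = L x v)
    -- ξ takes values in the constraint distribution
    (hξH : ∀ x, ξ x ∈ H x) :
    ∀ t₁ t₂ : ℝ,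
      fderiv ℝ (L (q t₁)) (deriv q t₁) (ξ (q t₁))
        = fderiv ℝ (L (q t₂)) (deriv q t₂) (ξ (q t₂)) := by
  set p : ℝ → (Fin n → ℝ) →L[ℝ] ℝ := fun t => fderiv ℝ (L (q t)) (deriv q t)
  have hqd : Differentiable ℝ q := hq.differentiable two_ne_zero
  have hp : Differentiable ℝ p :=
    ((ContDiff.fderiv_partial_snd (n := 1) hL).comp
      ((hq.of_le one_le_two).prodMk (hq.deriv' (n := 1)))).differentiable one_ne_zero
  have hξq : Differentiable ℝ fun t => ξ (q t) := (hξ.differentiable one_ne_zero).comp hqd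
  have hderiv : ∀ t, deriv (fun t => p t (ξ (q t))) t = 0 := by
    intro t
    have hdAlembert :
        deriv p t (ξ (q t)) = fderiv ℝ (fun x => L x (deriv q t)) (q t) (ξ (q t)) := by
      rw [← hLdA t _ (hξH (q t)), deriv_clm_apply (hp t) (differentiableAt_const _)]
      simp
    have hξq' : HasDerivAt (fun t => ξ (q t)) (fderiv ℝ ξ (q t) (deriv q t)) t :=
      (hξ.differentiable one_ne_zero _).hasFDerivAt.comp_hasDerivAt t (hqd t).hasDerivAt
    rw [deriv_clm_apply (hp t) (hξq t), hdAlembert, hξq'.deriv]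
    exact infinitesimal_invariance_of_flow_invariant (hL.differentiable two_ne_zero) hξ hφreg
      hflow hφ0 hsym _ _
  exact is_const_of_deriv_eq_zero (hp.clm_apply hξq) hderiv

/-- **Nonholonomic Noether theorem.**
Let `L : ℝⁿ × ℝⁿ → ℝ` be a C² Lagrangian, `H` a constraint distribution assigning to each
`q ∈ ℝⁿ` a linear subspace of ℝⁿ, and `q : ℝ → ℝⁿ` a C² curve satisfying the
Lagrange–d'Alembert conditions: the velocity lies in `H (q t)` and the Euler–Lagrange
covector `(d/dt)[D₂L(q, q̇)] − D₁L(q, q̇)` annihilates `H (q t)` for all `t`.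
If `ξ` is a C¹ vector field with global flow `φ` (C¹ in `(s,x)`, differentiable in `x`)
whose flow preserves `L` (acting on velocities via the tangent map), and `ξ x ∈ H x`
for all `x`, then `t ↦ D₂L(q t, q̇ t)·ξ(q t)` is constant. -/
theorem nonholonomic_noether
    (n : ℕ)
    (L : (Fin n → ℝ) → (Fin n → ℝ) → ℝ)
    (hL : ContDiff ℝ 2 (fun p : (Fin n → ℝ) × (Fin n → ℝ) => L p.1 p.2))
    (H : (Fin n → ℝ) → Submodule ℝ (Fin n → ℝ))
    (q : ℝ → (Fin n → ℝ)) (hq : ContDiff ℝ 2 q)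
    -- the curve is horizontal
    (hhor : ∀ t : ℝ, deriv q t ∈ H (q t))
    -- Lagrange–d'Alembert: the Euler–Lagrange covector annihilates H(q t)
    (hLdA : ∀ t : ℝ, ∀ h ∈ H (q t),
      deriv (fun s => fderiv ℝ (L (q s)) (deriv q s) h) t
        = fderiv ℝ (fun x => L x (deriv q t)) (q t) h)
    -- the symmetry vector field and its global flow
    (ξ : (Fin n → ℝ) → (Fin n → ℝ)) (hξ : ContDiff ℝ 1 ξ)
    (φ : ℝ → (Fin n → ℝ) → (Fin n → ℝ))
    (hφreg : ContDiff ℝ 1 (fun p : ℝ × (Fin n → ℝ) => φ p.1 p.2))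
    (hφx : ∀ s : ℝ, Differentiable ℝ (φ s))
    (hflow : ∀ (s : ℝ) (x : Fin n → ℝ), HasDerivAt (fun u => φ u x) (ξ (φ s x)) s)
    (hφ0 : ∀ x, φ 0 x = x)
    -- the flow preserves the Lagrangian
    (hsym : ∀ (s : ℝ) (x v : Fin n → ℝ), L (φ s x) (fderiv ℝ (φ s) x v) = L x v)
    -- ξ takes values in the constraint distribution
    (hξH : ∀ x, ξ x ∈ H x) :
    ∀ t₁ t₂ : ℝ,
      fderiv ℝ (L (q t₁)) (deriv q t₁) (ξ (q t₁))
        = fderiv ℝ (L (q t₂)) (deriv q t₂) (ξ (q t₂)) :=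
  nonholonomic_noether_general n L hL H q hq hLdA ξ hξ φ hφreg hflow hφ0 hsym hξH
end

section
/- Veselova's quartic integral: let A be an invertible 3×3 real matrix, let L, γ : ℝ → ℝ³ be differentiable and λ : ℝ → ℝ continuous, with Ω = A⁻¹L, and suppose L̇ = L × Ω + λγ and γ̇ = γ × Ω hold for all t, and that ⟨γ(0), γ(0)⟩ = 1. Then the quantity G = ⟨L, L⟩ − ⟨L, γ⟩² is constant in t. -/
open Matrix

def dot3 (u v : Fin 3 → ℝ) : ℝ := u 0 * v 0 + u 1 * v 1 + u 2 * v 2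

def cross3 (u v : Fin 3 → ℝ) : Fin 3 → ℝ :=
  ![u 1 * v 2 - u 2 * v 1, u 2 * v 0 - u 0 * v 2, u 0 * v 1 - u 1 * v 0]

/-!
Along the flow, `d/dt ⟨L, L⟩ = 2λ⟨L, γ⟩` since `L × Ω ⊥ L`, and `d/dt ⟨L, γ⟩ = λ⟨γ, γ⟩` since
the two triple products `⟨L × Ω, γ⟩` and `⟨L, γ × Ω⟩` cancel. Hence `Ġ = 2λ⟨L, γ⟩(1 - ⟨γ, γ⟩)`,
which vanishes because `γ̇ = γ × Ω ⊥ γ` keeps `⟨γ, γ⟩ = 1`.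
-/

lemma dot3_cross3_self_left (u v : Fin 3 → ℝ) : dot3 u (cross3 u v) = 0 := by
  simp only [dot3, cross3, cons_val_zero, cons_val_one, cons_val_two, head_cons, tail_cons]
  ring

lemma dot3_cross3_add_dot3_cross3 (u v w : Fin 3 → ℝ) :
    dot3 (cross3 u w) v + dot3 u (cross3 v w) = 0 := by
  simp only [dot3, cross3, cons_val_zero, cons_val_one, cons_val_two, head_cons, tail_cons]
  ring

lemma dot3_comm (u v : Fin 3 → ℝ) : dot3 u v = dot3 v u := by
  simp only [dot3]
  ring

lemma dot3_add_left (u v w : Fin 3 → ℝ) : dot3 (u + v) w = dot3 u w + dot3 v w := by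
  simp only [dot3, Pi.add_apply]
  ring

lemma dot3_smul_left (c : ℝ) (u v : Fin 3 → ℝ) : dot3 (c • u) v = c * dot3 u v := by
  simp only [dot3, Pi.smul_apply, smul_eq_mul]
  ring

lemma HasDerivAt.dot3 {u v : ℝ → Fin 3 → ℝ} {u' v' : Fin 3 → ℝ} {t : ℝ}
    (hu : HasDerivAt u u' t) (hv : HasDerivAt v v' t) :
    HasDerivAt (fun s => dot3 (u s) (v s)) (dot3 u' (v t) + dot3 (u t) v') t := by
  have hc : ∀ i, HasDerivAt (fun s => u s i * v s i) (u' i * v t i + u t i * v' i) t :=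
    fun i => (hasDerivAt_pi.1 hu i).mul (hasDerivAt_pi.1 hv i)
  refine (((hc 0).add (hc 1)).add (hc 2)).congr_deriv ?_
  simp only [_root_.dot3]
  ring

theorem dot3_self_eq_of_hasDerivAt_cross3 {γ Ω : ℝ → Fin 3 → ℝ}
    (hγ : ∀ t, HasDerivAt γ (cross3 (γ t) (Ω t)) t) (s t : ℝ) :
    dot3 (γ s) (γ s) = dot3 (γ t) (γ t) := by
  have hderiv : ∀ t, HasDerivAt (fun t => dot3 (γ t) (γ t)) 0 t := fun t =>
    ((hγ t).dot3 (hγ t)).congr_deriv <| by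
      rw [dot3_comm (cross3 _ _), dot3_cross3_self_left, add_zero]
  exact is_const_of_deriv_eq_zero (fun t => (hderiv t).differentiableAt)
    (fun t => (hderiv t).deriv) s t

def quarticIntegral (L γ : Fin 3 → ℝ) : ℝ := dot3 L L - dot3 L γ ^ 2

theorem hasDerivAt_quarticIntegral {L γ Ω : ℝ → Fin 3 → ℝ} {lam : ℝ → ℝ} {t : ℝ}
    (hL : HasDerivAt L (cross3 (L t) (Ω t) + lam t • γ t) t)
    (hγ : HasDerivAt γ (cross3 (γ t) (Ω t)) t) :
    HasDerivAt (fun s => quarticIntegral (L s) (γ s))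
      (2 * lam t * dot3 (L t) (γ t) * (1 - dot3 (γ t) (γ t))) t := by
  have hLL : dot3 (cross3 (L t) (Ω t) + lam t • γ t) (L t)
      + dot3 (L t) (cross3 (L t) (Ω t) + lam t • γ t) = 2 * lam t * dot3 (L t) (γ t) := by
    rw [dot3_comm (L t), dot3_add_left, dot3_smul_left, dot3_comm (cross3 _ _),
      dot3_cross3_self_left, dot3_comm (γ t)]
    ring
  have hLγ : dot3 (cross3 (L t) (Ω t) + lam t • γ t) (γ t)
      + dot3 (L t) (cross3 (γ t) (Ω t)) = lam t * dot3 (γ t) (γ t) := by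
    rw [dot3_add_left, dot3_smul_left, add_right_comm, dot3_cross3_add_dot3_cross3, zero_add]
  refine ((hL.dot3 hL).sub ((hL.dot3 hγ).pow 2)).congr_deriv ?_
  rw [hLL, hLγ]
  push_cast
  ring

theorem veselova_quartic_integral_general
    (L γ : ℝ → Fin 3 → ℝ) (lam : ℝ → ℝ)
    (Ω : ℝ → Fin 3 → ℝ)
    (hL : ∀ t, HasDerivAt L (cross3 (L t) (Ω t) + lam t • γ t) t)
    (hγ : ∀ t, HasDerivAt γ (cross3 (γ t) (Ω t)) t)
    (hγ0 : dot3 (γ 0) (γ 0) = 1) :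
    ∀ s t, dot3 (L s) (L s) - (dot3 (L s) (γ s)) ^ 2
        = dot3 (L t) (L t) - (dot3 (L t) (γ t)) ^ 2 := by
  have hunit : ∀ t, dot3 (γ t) (γ t) = 1 := fun t =>
    (dot3_self_eq_of_hasDerivAt_cross3 hγ t 0).trans hγ0
  have hG : ∀ t, HasDerivAt (fun s => quarticIntegral (L s) (γ s)) 0 t := fun t =>
    (hasDerivAt_quarticIntegral (hL t) (hγ t)).congr_deriv (by rw [hunit, sub_self, mul_zero])
  exact is_const_of_deriv_eq_zero (fun t => (hG t).differentiableAt) (fun t => (hG t).deriv)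

/-- **Veselova's quartic integral.**  With `A` invertible, `Ω = A⁻¹L`, equations
`L̇ = L × Ω + λγ`, `γ̇ = γ × Ω` (λ continuous), and `⟨γ(0), γ(0)⟩ = 1`, the quantity
`G = ⟨L, L⟩ − ⟨L, γ⟩²` is constant in `t`. -/
theorem veselova_quartic_integral
    (A : Matrix (Fin 3) (Fin 3) ℝ) (hinv : IsUnit A.det)
    (L γ : ℝ → Fin 3 → ℝ) (lam : ℝ → ℝ) (hlam : Continuous lam)
    (Ω : ℝ → Fin 3 → ℝ) (hΩ : ∀ t, Ω t = A⁻¹.mulVec (L t))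
    (hL : ∀ t, HasDerivAt L (cross3 (L t) (Ω t) + lam t • γ t) t)
    (hγ : ∀ t, HasDerivAt γ (cross3 (γ t) (Ω t)) t)
    (hγ0 : dot3 (γ 0) (γ 0) = 1) :
    ∀ s t, dot3 (L s) (L s) - (dot3 (L s) (γ s)) ^ 2
        = dot3 (L t) (L t) - (dot3 (L t) (γ t)) ^ 2 :=
  veselova_quartic_integral_general L γ lam Ω hL hγ hγ0
end

section
/- First integrals of Chaplygin's marble: let B be a symmetric 3×3 real matrix and κ ∈ ℝ. Let L, γ, Ω : ℝ → ℝ³ with Ω and γ differentiable, satisfying for all t the algebraic relation L(t) = BΩ(t) − κ⟨γ(t), Ω(t)⟩γ(t) and the differential equations L̇(t) = L(t) × Ω(t) and γ̇(t) = γ(t) × Ω(t). Then the four quantities ⟨γ, γ⟩, ⟨L, γ⟩, ⟨L, L⟩, and the energy ⟨Ω, L⟩ are all constant in t. -/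
open Matrix

/-!
The first three quantities are inner products of vectors that rotate with the same angular
velocity `Ω`, and `(u × Ω)·v + u·(v × Ω) = 0`. For the energy `E = ⟨Ω, L⟩` compute `Ė` twice.
From `L̇ = L × Ω ⟂ Ω` we get `Ė = ⟨Ω̇, L⟩`. From `E = ⟨Ω, BΩ⟩ − κ⟨γ, Ω⟩²`, the symmetry of `B`
and `⟨γ̇, Ω⟩ = ⟨γ × Ω, Ω⟩ = 0` we get `Ė = 2⟨Ω̇, L⟩`. Hence `Ė = 0`.
-/

theorem dot3_eq_dotProduct (u v : Fin 3 → ℝ) : dot3 u v = u ⬝ᵥ v :=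
  (vec3_dotProduct u v).symm

theorem cross3_eq_crossProduct (u v : Fin 3 → ℝ) : cross3 u v = u ⨯₃ v := rfl

theorem is_const_of_hasDerivAt_zero {𝕜 G : Type*} [RCLike 𝕜] [NormedAddCommGroup G]
    [NormedSpace 𝕜 G] {f : 𝕜 → G} (hf : ∀ x, HasDerivAt f 0 x) (x y : 𝕜) : f x = f y :=
  is_const_of_deriv_eq_zero (fun x => (hf x).differentiableAt) (fun x => (hf x).deriv) x y

section Calculus

variable {𝕜 : Type*} [NontriviallyNormedField 𝕜] {n : Type*} [Fintype n]
  {f g : 𝕜 → n → 𝕜} {f' g' : n → 𝕜} {t : 𝕜}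

theorem HasDerivAt.dotProduct (hf : HasDerivAt f f' t) (hg : HasDerivAt g g' t) :
    HasDerivAt (fun s => f s ⬝ᵥ g s) (f' ⬝ᵥ g t + f t ⬝ᵥ g') t := by
  simp only [_root_.dotProduct, ← Finset.sum_add_distrib]
  exact HasDerivAt.fun_sum fun i _ => (hasDerivAt_pi.1 hf i).mul (hasDerivAt_pi.1 hg i)

theorem HasDerivAt.mulVec {m : Type*} (A : Matrix m n 𝕜) (hf : HasDerivAt f f' t) :
    HasDerivAt (fun s => A *ᵥ f s) (A *ᵥ f') t :=
  hasDerivAt_pi.2 fun i =>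
    ((hasDerivAt_const t (A i)).dotProduct hf).congr_deriv (by rw [zero_dotProduct, zero_add]; rfl)

theorem HasDerivAt.dotProduct_mulVec_self [DecidableEq n] {A : Matrix n n 𝕜} (hA : Aᵀ = A)
    (hf : HasDerivAt f f' t) :
    HasDerivAt (fun s => f s ⬝ᵥ A *ᵥ f s) (2 * (f' ⬝ᵥ A *ᵥ f t)) t := by
  convert hf.dotProduct (hf.mulVec A) using 1
  rw [dotProduct_mulVec (f t), ← mulVec_transpose, hA, dotProduct_comm (A *ᵥ f t)]
  ring

end Calculus

theorem cross_dotProduct_add_dotProduct_cross (u v w : Fin 3 → ℝ) :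
    u ⨯₃ w ⬝ᵥ v + u ⬝ᵥ v ⨯₃ w = 0 := by
  rw [dotProduct_comm, triple_product_permutation, ← cross_anticomm v w, dotProduct_neg,
    neg_add_cancel]

section Marble

variable {B : Matrix (Fin 3) (Fin 3) ℝ} {κ : ℝ} {L γ Ω : ℝ → Fin 3 → ℝ} {Ω' : Fin 3 → ℝ} {t : ℝ}

theorem hasDerivAt_dotProduct_of_rotating {f g : ℝ → Fin 3 → ℝ}
    (hf : HasDerivAt f (f t ⨯₃ Ω t) t) (hg : HasDerivAt g (g t ⨯₃ Ω t) t) :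
    HasDerivAt (fun s => f s ⬝ᵥ g s) 0 t := by
  simpa only [cross_dotProduct_add_dotProduct_cross] using hf.dotProduct hg

theorem hasDerivAt_energy_of_momentum (hB : Bᵀ = B)
    (hrel : ∀ s, L s = B *ᵥ Ω s - (κ * (γ s ⬝ᵥ Ω s)) • γ s)
    (hγ : HasDerivAt γ (γ t ⨯₃ Ω t) t) (hΩ : HasDerivAt Ω Ω' t) :
    HasDerivAt (fun s => Ω s ⬝ᵥ L s) (2 * (Ω' ⬝ᵥ L t)) t := by
  have hΩγ : HasDerivAt (fun s => Ω s ⬝ᵥ γ s) (Ω' ⬝ᵥ γ t) t := by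
    simpa only [dot_cross_self, add_zero] using hΩ.dotProduct hγ
  have hE : (fun s => Ω s ⬝ᵥ L s) = fun s => Ω s ⬝ᵥ B *ᵥ Ω s - κ * (Ω s ⬝ᵥ γ s) ^ 2 := by
    funext s
    rw [hrel s, dotProduct_sub, dotProduct_smul, smul_eq_mul, dotProduct_comm (γ s)]
    ring
  rw [hE]
  refine ((hΩ.dotProduct_mulVec_self hB).sub ((hΩγ.pow 2).const_mul κ)).congr_deriv ?_
  rw [hrel t, dotProduct_sub, dotProduct_smul, smul_eq_mul, dotProduct_comm (γ t)]
  ring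

theorem hasDerivAt_energy_eq_zero (hB : Bᵀ = B)
    (hrel : ∀ s, L s = B *ᵥ Ω s - (κ * (γ s ⬝ᵥ Ω s)) • γ s)
    (hL : HasDerivAt L (L t ⨯₃ Ω t) t) (hγ : HasDerivAt γ (γ t ⨯₃ Ω t) t)
    (hΩ : HasDerivAt Ω Ω' t) :
    HasDerivAt (fun s => Ω s ⬝ᵥ L s) 0 t := by
  have hdirect : HasDerivAt (fun s => Ω s ⬝ᵥ L s) (Ω' ⬝ᵥ L t) t := by
    simpa only [dot_cross_self, add_zero] using hΩ.dotProduct hL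
  have hvanish : Ω' ⬝ᵥ L t = 0 := by
    linarith [hdirect.unique (hasDerivAt_energy_of_momentum hB hrel hγ hΩ)]
  rwa [hvanish] at hdirect

end Marble

/-- **First integrals of Chaplygin's marble.**  Let `B` be symmetric, `κ ∈ ℝ`, and
suppose `L(t) = BΩ(t) − κ⟨γ(t),Ω(t)⟩γ(t)` with `Ω`, `γ` differentiable and
`L̇ = L × Ω`, `γ̇ = γ × Ω`.  Then `⟨γ,γ⟩`, `⟨L,γ⟩`, `⟨L,L⟩` and the energy `⟨Ω,L⟩`
are all constant in `t`. -/
theorem marble_first_integrals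
    (B : Matrix (Fin 3) (Fin 3) ℝ) (hsym : Bᵀ = B) (κ : ℝ)
    (L γ Ω : ℝ → Fin 3 → ℝ)
    (hΩdiff : Differentiable ℝ Ω)
    (hrel : ∀ t, L t = B.mulVec (Ω t) - (κ * dot3 (γ t) (Ω t)) • γ t)
    (hL : ∀ t, HasDerivAt L (cross3 (L t) (Ω t)) t)
    (hγ : ∀ t, HasDerivAt γ (cross3 (γ t) (Ω t)) t) :
    (∀ s t, dot3 (γ s) (γ s) = dot3 (γ t) (γ t)) ∧
    (∀ s t, dot3 (L s) (γ s) = dot3 (L t) (γ t)) ∧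
    (∀ s t, dot3 (L s) (L s) = dot3 (L t) (L t)) ∧
    (∀ s t, dot3 (Ω s) (L s) = dot3 (Ω t) (L t)) := by
  simp only [dot3_eq_dotProduct, cross3_eq_crossProduct] at hrel hL hγ ⊢
  refine ⟨?_, ?_, ?_, ?_⟩ <;> refine is_const_of_hasDerivAt_zero fun t => ?_
  · exact hasDerivAt_dotProduct_of_rotating (hγ t) (hγ t)
  · exact hasDerivAt_dotProduct_of_rotating (hL t) (hγ t)
  · exact hasDerivAt_dotProduct_of_rotating (hL t) (hL t)
  · exact hasDerivAt_energy_eq_zero hsym hrel (hL t) (hγ t) (hΩdiff t).hasDerivAt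
end

section
/- The homogeneous Chaplygin sphere is not conformally symplectic at the T*SO(3) level: let e₁, …, e₆ be the standard basis of ℝ⁶, regarded inside the exterior algebra Λ(ℝ⁶). Let c ≠ 0, κ ≠ 0 and m₁, m₂, m₃ be real numbers, and set Ω₂ = c(e₁∧e₄ + e₂∧e₅) + e₃∧e₆ + m₁ e₅∧e₆ + m₂ e₆∧e₄ + m₃ e₄∧e₅ and D = −κ(e₁∧e₅∧e₆ + e₂∧e₆∧e₄). Then there exists no degree-one element α ∈ span{e₁, …, e₆} with Ω₂ ∧ α = D. -/
/-- The image `eVec i` of the `i`-th standard basis vector of ℝ⁶ in the exterior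
algebra Λ(ℝ⁶); wedge products are products in the exterior algebra. -/
noncomputable def eVec (i : Fin 6) : ExteriorAlgebra ℝ (Fin 6 → ℝ) :=
  ExteriorAlgebra.ι ℝ (Pi.single i (1 : ℝ))

/-- The alternating 3-form on ℝ⁶ extracting the `(i,j,k)` coefficient of a trivector:
the determinant of the 3×3 matrix of the `i,j,k` coordinates of the three arguments. -/
noncomputable def pick (i j k : Fin 6) : (Fin 6 → ℝ) [⋀^Fin 3]→ₗ[ℝ] ℝ :=
  (Matrix.detRowAlternating).compLinearMap (LinearMap.funLeft ℝ ℝ ![i, j, k])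

/-- The family of alternating forms which is `pick i j k` in degree 3 and `0` elsewhere. -/
noncomputable def fam (i j k : Fin 6) : ∀ n, (Fin 6 → ℝ) [⋀^Fin n]→ₗ[ℝ] ℝ
  | 3 => pick i j k
  | _ => 0

/-- The linear functional on Λ(ℝ⁶) extracting the `eᵢ ∧ eⱼ ∧ eₖ` coefficient. -/
noncomputable def phi (i j k : Fin 6) : ExteriorAlgebra ℝ (Fin 6 → ℝ) →ₗ[ℝ] ℝ :=
  ExteriorAlgebra.liftAlternating (fam i j k)

lemma triple_eq (a b c : Fin 6 → ℝ) :
    ExteriorAlgebra.ι ℝ a * ExteriorAlgebra.ι ℝ b * ExteriorAlgebra.ι ℝ c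
      = ExteriorAlgebra.ιMulti ℝ 3 ![a, b, c] := by
  simp [ExteriorAlgebra.ιMulti_apply, List.ofFn_succ, mul_assoc]

lemma phi_prod (i j k : Fin 6) (a b c : Fin 6 → ℝ) :
    phi i j k (ExteriorAlgebra.ι ℝ a * ExteriorAlgebra.ι ℝ b * ExteriorAlgebra.ι ℝ c)
      = Matrix.det (Matrix.of fun t s => (![a, b, c] t) ((![i, j, k] : Fin 3 → Fin 6) s)) := by
  rw [triple_eq, phi, ExteriorAlgebra.liftAlternating_apply_ιMulti]
  rfl

lemma phi_eee (i j k a b c : Fin 6) :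
    phi i j k (eVec a * eVec b * eVec c)
      = Matrix.det (Matrix.of fun t s =>
          (![(Pi.single a 1 : Fin 6 → ℝ), Pi.single b 1, Pi.single c 1] t)
            ((![i, j, k] : Fin 3 → Fin 6) s)) := by
  rw [eVec, eVec, eVec, phi_prod]

set_option maxHeartbeats 2000000 in
/-- **The homogeneous Chaplygin sphere is not conformally symplectic at the `T*SO(3)`
level.**  In Λ(ℝ⁶) with standard basis `e₁, …, e₆` (here indexed `0, …, 5`), let
`Ω₂ = c(e₁∧e₄ + e₂∧e₅) + e₃∧e₆ + m₁ e₅∧e₆ + m₂ e₆∧e₄ + m₃ e₄∧e₅` and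
`D = −κ(e₁∧e₅∧e₆ + e₂∧e₆∧e₄)`, with `c ≠ 0`, `κ ≠ 0`.  Then there is no degree-one
element `α` (i.e. no `α = ι(v)`, `v ∈ span{e₁,…,e₆} = ℝ⁶`) with `Ω₂ ∧ α = D`. -/
theorem homogeneous_sphere_no_conformal_factor
    (c κ m₁ m₂ m₃ : ℝ) (hc : c ≠ 0) (hκ : κ ≠ 0) :
    ¬ ∃ v : Fin 6 → ℝ,
      (c • (eVec 0 * eVec 3 + eVec 1 * eVec 4) + eVec 2 * eVec 5
          + m₁ • (eVec 4 * eVec 5) + m₂ • (eVec 5 * eVec 3) + m₃ • (eVec 3 * eVec 4))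
        * ExteriorAlgebra.ι ℝ v
      = -κ • (eVec 0 * eVec 4 * eVec 5 + eVec 1 * eVec 5 * eVec 3) := by
  rintro ⟨v, hv⟩
  have hsingle : v = ∑ i : Fin 6, v i • (Pi.single i 1 : Fin 6 → ℝ) := by
    ext j
    simp [Pi.single_apply]
  have hι : ExteriorAlgebra.ι ℝ v = ∑ i : Fin 6, v i • eVec i := by
    conv_lhs => rw [hsingle]
    simp [eVec]
  rw [hι] at hv
  have h1 := congrArg (phi 0 4 5) hv
  have h2 := congrArg (phi 1 3 5) hv
  have h3 := congrArg (phi 0 3 5) hv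
  have h4 := congrArg (phi 1 4 5) hv
  simp only [Finset.mul_sum, mul_add, add_mul, mul_smul_comm, smul_mul_assoc, map_add,
    map_smul, map_sum, Fin.sum_univ_six, phi_eee] at h1 h2 h3 h4
  norm_num [Matrix.det_fin_three, Pi.single_apply] at h1
  norm_num [Matrix.det_fin_three, Pi.single_apply] at h2
  norm_num [Matrix.det_fin_three, Pi.single_apply] at h3
  norm_num [Matrix.det_fin_three, Pi.single_apply] at h4
  simp (config := { decide := true }) [Matrix.vecHead, Matrix.vecTail] at h1 h2 h3 h4
  have e1 : m₁ * v 0 = -κ := by linarith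
  have e2 : m₂ * v 1 = -κ := by linarith
  have e3 : m₂ * v 0 = c * v 5 := by linarith
  have e4 : m₁ * v 1 = -(c * v 5) := by linarith
  have h5 : (m₁ * v 0) * (m₂ * v 1) = (m₂ * v 0) * (m₁ * v 1) := by ring
  rw [e1, e2, e3, e4] at h5
  have hκ2 : 0 < κ ^ 2 := by positivity
  nlinarith [sq_nonneg (c * v 5)]
end

section
/- The homogeneous Chaplygin sphere is not even affine symplectic at the T*SO(3) level: let δ₁, …, δ₆ be the dual of the standard basis of ℝ⁶ and consider the alternating 3-form D = −κ(δ₁∧δ₅∧δ₆ + δ₂∧δ₆∧δ₄) on ℝ⁶, with κ ≠ 0. Then for every vector X = (0, 0, 0, ω₁, ω₂, ω₃) with (ω₁, ω₂, ω₃) ≠ (0,0,0), the contraction i_X D, i.e. the alternating 2-form (v, w) ↦ D(X, v, w), is nonzero; explicitly i_X D = −κ(−ω₂ δ₁∧δ₆ + ω₃ δ₁∧δ₅ − ω₃ δ₂∧δ₄ + ω₁ δ₂∧δ₆). -/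
/-- The alternating 3-form `D = −κ(δ₁∧δ₅∧δ₆ + δ₂∧δ₆∧δ₄)` on ℝ⁶ (coordinates indexed
`0, …, 5`), written via determinants of the selected components:
`δᵢ∧δⱼ∧δₖ(u,v,w) = det` of the matrix of `(i,j,k)`-components of `u, v, w`. -/
def D3form (κ : ℝ) (u v w : Fin 6 → ℝ) : ℝ :=
  -κ * (Matrix.det !![u 0, u 4, u 5; v 0, v 4, v 5; w 0, w 4, w 5]
      + Matrix.det !![u 1, u 5, u 3; v 1, v 5, v 3; w 1, w 5, w 3])

/-- **The homogeneous Chaplygin sphere is not even affine symplectic at the `T*SO(3)`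
level.**  For the 3-form `D = −κ(δ₁∧δ₅∧δ₆ + δ₂∧δ₆∧δ₄)` with `κ ≠ 0` and any vector
`X = (0,0,0,ω₁,ω₂,ω₃)` with `(ω₁,ω₂,ω₃) ≠ (0,0,0)`, the contraction
`i_X D : (v,w) ↦ D(X,v,w)` is nonzero; explicitly
`i_X D = −κ(−ω₂ δ₁∧δ₆ + ω₃ δ₁∧δ₅ − ω₃ δ₂∧δ₄ + ω₁ δ₂∧δ₆)`. -/
theorem homogeneous_sphere_not_affine_symplectic
    (κ : ℝ) (hκ : κ ≠ 0) (ω₁ ω₂ ω₃ : ℝ) (hω : ¬(ω₁ = 0 ∧ ω₂ = 0 ∧ ω₃ = 0)) :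
    (∀ v w : Fin 6 → ℝ,
      D3form κ ![0, 0, 0, ω₁, ω₂, ω₃] v w
        = -κ * (-ω₂ * (v 0 * w 5 - v 5 * w 0) + ω₃ * (v 0 * w 4 - v 4 * w 0)
            - ω₃ * (v 1 * w 3 - v 3 * w 1) + ω₁ * (v 1 * w 5 - v 5 * w 1))) ∧
    (∃ v w : Fin 6 → ℝ, D3form κ ![0, 0, 0, ω₁, ω₂, ω₃] v w ≠ 0) := by
  have key : ∀ v w : Fin 6 → ℝ,
      D3form κ ![0, 0, 0, ω₁, ω₂, ω₃] v w
        = -κ * (-ω₂ * (v 0 * w 5 - v 5 * w 0) + ω₃ * (v 0 * w 4 - v 4 * w 0)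
            - ω₃ * (v 1 * w 3 - v 3 * w 1) + ω₁ * (v 1 * w 5 - v 5 * w 1)) := by
    intro v w
    simp [D3form, Matrix.det_fin_three, Matrix.cons_val_zero, Matrix.cons_val_one,
      Matrix.head_cons, show (2:Fin 6)=⟨2,by norm_num⟩ from rfl,
      show (3:Fin 6)=⟨3,by norm_num⟩ from rfl, show (4:Fin 6)=⟨4,by norm_num⟩ from rfl,
      show (![0,0,0,ω₁,ω₂,ω₃] : Fin 6 → ℝ) 5 = ω₃ from rfl]
    left; ring
  refine ⟨key, ?_⟩
  by_cases h1 : ω₁ = 0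
  · by_cases h2 : ω₂ = 0
    · have h3 : ω₃ ≠ 0 := fun h3 => hω ⟨h1, h2, h3⟩
      refine ⟨![1,0,0,0,0,0], ![0,0,0,0,1,0], ?_⟩
      rw [key]; simp [h1, h2]; exact ⟨hκ, h3⟩
    · refine ⟨![1,0,0,0,0,0], ![0,0,0,0,0,1], ?_⟩
      rw [key]
      simp [show (![(0:ℝ),0,0,0,0,1] : Fin 6 → ℝ) 5 = 1 from rfl, h1]
      exact ⟨hκ, h2⟩
  · refine ⟨![0,1,0,0,0,0], ![0,0,0,0,0,1], ?_⟩
    rw [key]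
    simp [show (![(0:ℝ),0,0,0,0,1] : Fin 6 → ℝ) 5 = 1 from rfl]
    exact ⟨hκ, h1⟩
end
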